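/- arXiv:2102.03287 — 9 statements merged into one kernel-verified Lean document; each statement's English description precedes it below -/
import Mathlib

section
/- Let (X,+) be an Abelian Polish group, A a translation-invariant σ-algebra on X containing all Borel sets, and I a translation-invariant σ-ideal on X containing all singletons such that every member of I is contained in a member of A ∩ I. Then the pair (A, I) has the Steinhaus Property if and only if it has the Smital Property. -/
open scoped Pointwise

/-- `I` is a σ-ideal: contains singletons, closed under subsets and countable unions. -/
def IsSigmaIdeal {X : Type*} (I : Set (Set X)) : Prop :=
  (∀ x : X, {x} ∈ I) ∧
  (∀ A ∈ I, ∀ B : Set X, B ⊆ A → B ∈ I) ∧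
  (∀ f : ℕ → Set X, (∀ n, f n ∈ I) → (⋃ n, f n) ∈ I)

/-
Both directions rest on the identity `a = b + (a - b)`.
If `A - B` has empty interior, then `D := (A - B)ᶜ` is dense and `A` misses `B + D`, so the
Smital property applied to `B` forces `A ∈ I`. Conversely, for a dense `D` the set
`(D + A)ᶜ - A` never meets `D`, so it has empty interior; taking `D` countable (the space is
separable), `D + A` is a countable union of translates of `A`, hence in `𝒜`, and the
Steinhaus property applied to `(D + A)ᶜ` and `A` forces `(D + A)ᶜ ∈ I`.
-/

theorem Dense.exists_seq_denseRange_subset {X : Type*} [TopologicalSpace X]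
    [SecondCountableTopology X] [Nonempty X] {D : Set X} (hD : Dense D) :
    ∃ u : ℕ → X, DenseRange u ∧ Set.range u ⊆ D := by
  obtain ⟨D₀, hD₀D, hD₀c, hD₀d⟩ := hD.exists_countable_dense_subset
  obtain ⟨u, rfl⟩ := hD₀c.exists_eq_range hD₀d.nonempty
  exact ⟨u, hD₀d, hD₀D⟩

section AddGroup

variable {X : Type*} [AddGroup X]

theorem Set.disjoint_compl_add_sub (D A : Set X) : Disjoint D ((D + A)ᶜ - A) := by
  rintro _ hDsub hsub d hd
  obtain ⟨s, hs, a, ha, rfl⟩ := hsub hd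
  exact hs ⟨s - a, hDsub hd, a, ha, sub_add_cancel s a⟩

theorem Dense.interior_compl_add_sub_eq_empty [TopologicalSpace X] {D : Set X} (hD : Dense D)
    (A : Set X) : interior ((D + A)ᶜ - A) = ∅ :=
  interior_eq_empty_iff_dense_compl.2 <|
    hD.mono (Set.disjoint_compl_add_sub D A).subset_compl_right

theorem Set.iUnion_add_left_image_eq_range_add (u : ℕ → X) (A : Set X) :
    ⋃ n, (fun a => u n + a) '' A = Set.range u + A := by
  rw [← Set.iUnion_add_left_image, Set.biUnion_range]

end AddGroup

theorem Set.subset_compl_add_compl_sub {X : Type*} [AddCommGroup X] (A B : Set X) :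
    A ⊆ (B + (A - B)ᶜ)ᶜ := by
  rintro a ha ⟨b, hb, d, hd, rfl⟩
  exact hd ⟨b + d, ha, b, hb, add_sub_cancel_left b d⟩

theorem steinhaus_iff_smital_general
    {X : Type*} [TopologicalSpace X] [PolishSpace X] [AddCommGroup X]
    (𝒜 : Set (Set X)) (I : Set (Set X))
    (h𝒜compl : ∀ A ∈ 𝒜, Aᶜ ∈ 𝒜)
    (h𝒜union : ∀ f : ℕ → Set X, (∀ n, f n ∈ 𝒜) → (⋃ n, f n) ∈ 𝒜)
    (h𝒜inv : ∀ A ∈ 𝒜, ∀ x : X, (fun a => x + a) '' A ∈ 𝒜)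
    (hI : IsSigmaIdeal I) :
    (∀ A ∈ 𝒜, A ∉ I → ∀ B ∈ 𝒜, B ∉ I → (interior (A - B)).Nonempty) ↔
    (∀ D : Set X, Dense D → ∀ A ∈ 𝒜, A ∉ I → (A + D)ᶜ ∈ I) := by
  have hIsub := hI.2.1
  constructor
  · intro hSt D hD A hA hAI
    have : Nonempty X := ⟨(hSt A hA hAI A hA hAI).some⟩
    obtain ⟨u, hu, huD⟩ := hD.exists_seq_denseRange_subset
    have hS : Set.range u + A ∈ 𝒜 := by
      rw [← Set.iUnion_add_left_image_eq_range_add]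
      exact h𝒜union _ fun n => h𝒜inv A hA (u n)
    have hScI : (Set.range u + A)ᶜ ∈ I := by
      by_contra hSc
      have := hSt _ (h𝒜compl _ hS) hSc A hA hAI
      rw [hu.interior_compl_add_sub_eq_empty] at this
      exact Set.not_nonempty_empty this
    refine hIsub _ hScI _ (Set.compl_subset_compl.2 ?_)
    rw [add_comm A D]
    exact Set.add_subset_add_right huD
  · intro hSm A hA hAI B hB hBI
    by_contra hAB
    have hD : Dense (A - B)ᶜ :=
      interior_eq_empty_iff_dense_compl.1 (Set.not_nonempty_iff_eq_empty.1 hAB)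
    exact hAI (hIsub _ (hSm _ hD B hB hBI) A (Set.subset_compl_add_compl_sub A B))

/-- for a translation-invariant σ-algebra `𝒜` containing all Borel sets and a
translation-invariant σ-ideal `I` on an Abelian Polish group, with every member of `I`
contained in a member of `𝒜 ∩ I`, the Steinhaus property of `(𝒜, I)` is equivalent to
the Smital property. -/
theorem steinhaus_iff_smital
    {X : Type*} [TopologicalSpace X] [PolishSpace X] [AddCommGroup X]
    [IsTopologicalAddGroup X] [MeasurableSpace X] [BorelSpace X]
    (𝒜 : Set (Set X)) (I : Set (Set X))
    (h𝒜univ : Set.univ ∈ 𝒜)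
    (h𝒜compl : ∀ A ∈ 𝒜, Aᶜ ∈ 𝒜)
    (h𝒜union : ∀ f : ℕ → Set X, (∀ n, f n ∈ 𝒜) → (⋃ n, f n) ∈ 𝒜)
    (h𝒜borel : ∀ B : Set X, MeasurableSet B → B ∈ 𝒜)
    (h𝒜inv : ∀ A ∈ 𝒜, ∀ x : X, (fun a => x + a) '' A ∈ 𝒜)
    (hI : IsSigmaIdeal I)
    (hIinv : ∀ A ∈ I, ∀ x : X, (fun a => x + a) '' A ∈ I)
    (hbase : ∀ A ∈ I, ∃ B ∈ 𝒜 ∩ I, A ⊆ B) :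
    (∀ A ∈ 𝒜, A ∉ I → ∀ B ∈ 𝒜, B ∉ I → (interior (A - B)).Nonempty) ↔
    (∀ D : Set X, Dense D → ∀ A ∈ 𝒜, A ∉ I → (A + D)ᶜ ∈ I) :=
  steinhaus_iff_smital_general 𝒜 I h𝒜compl h𝒜union h𝒜inv hI
end

section
/- Let X, Y be Polish spaces and let I, J be σ-ideals with Borel bases on X and Y respectively. If J is Borel-on-measurable, i.e. for every Borel set C ⊆ X×Y the set {x ∈ X : C_x ∉ J} belongs to the σ-algebra σ(Bor(X) ∪ I), then J is measurable-on-measurable, i.e. for every set C in the σ-algebra σ(Bor(X×Y) ∪ (I⊗J)) the set {x ∈ X : C_x ∉ J} belongs to σ(Bor(X) ∪ I). -/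
open MeasureTheory

/-- `I` has a Borel base: every member is contained in a Borel member. -/
def HasBorelBase {X : Type*} [MeasurableSpace X] (I : Set (Set X)) : Prop :=
  ∀ A ∈ I, ∃ B : Set X, MeasurableSet B ∧ A ⊆ B ∧ B ∈ I

/-- The Fubini product of two σ-ideals with Borel bases. -/
def FubiniProd {X Y : Type*} [MeasurableSpace X] [MeasurableSpace Y]
    (I : Set (Set X)) (J : Set (Set Y)) : Set (Set (X × Y)) :=
  {K | ∃ C : Set (X × Y), MeasurableSet C ∧ K ⊆ C ∧ {x : X | {y : Y | (x, y) ∈ C} ∉ J} ∈ I}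

/-- The σ-algebra generated by the Borel sets together with a family `I` of sets. -/
def measAlg {X : Type*} [MeasurableSpace X] (I : Set (Set X)) : MeasurableSpace X :=
  MeasurableSpace.generateFrom ({s : Set X | MeasurableSet s} ∪ I)

/-- A σ-ideal is closed under binary unions. -/
lemma IsSigmaIdeal.union {X : Type*} {I : Set (Set X)} (hI : IsSigmaIdeal I)
    {A B : Set X} (hA : A ∈ I) (hB : B ∈ I) : A ∪ B ∈ I := by
  have h := hI.2.2 (fun n => if n = 0 then A else B) (by
    intro n; by_cases h0 : n = 0 <;> simp [h0, hA, hB])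
  have he : (⋃ n, if n = 0 then A else B) = A ∪ B := by
    ext z
    simp only [Set.mem_iUnion, Set.mem_union]
    constructor
    · rintro ⟨n, hn⟩
      by_cases h0 : n = 0 <;> simp [h0] at hn <;> tauto
    · rintro (hz | hz)
      · exact ⟨0, by simp [hz]⟩
      · exact ⟨1, by simp [hz]⟩
  rwa [he] at h

/-- if `J` is Borel-on-measurable, then `J` is measurable-on-measurable. -/
theorem measurable_on_measurable_of_borel_on_measurable
    {X Y : Type*} [TopologicalSpace X] [PolishSpace X] [MeasurableSpace X] [BorelSpace X]
    [TopologicalSpace Y] [PolishSpace Y] [MeasurableSpace Y] [BorelSpace Y]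
    (I : Set (Set X)) (J : Set (Set Y))
    (hI : IsSigmaIdeal I) (hIb : HasBorelBase I)
    (hJ : IsSigmaIdeal J) (hJb : HasBorelBase J)
    (h : ∀ C : Set (X × Y), MeasurableSet C →
      MeasurableSet[measAlg I] {x : X | {y : Y | (x, y) ∈ C} ∉ J}) :
    ∀ C : Set (X × Y), MeasurableSet[measAlg (FubiniProd I J)] C →
      MeasurableSet[measAlg I] {x : X | {y : Y | (x, y) ∈ C} ∉ J} := by
  intro C hC
  -- trivial case: X empty
  by_cases hXe : IsEmpty X
  · have : {x : X | {y : Y | (x, y) ∈ C} ∉ J} = ∅ := Set.eq_empty_of_isEmpty _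
    rw [this]; exact @MeasurableSet.empty _ (measAlg I)
  rw [not_isEmpty_iff] at hXe
  -- trivial case: Y empty
  by_cases hYe : IsEmpty Y
  · by_cases h0 : (∅ : Set Y) ∈ J
    · have : {x : X | {y : Y | (x, y) ∈ C} ∉ J} = ∅ := by
        ext x
        simp only [Set.mem_setOf_eq, Set.mem_empty_iff_false, iff_false, not_not]
        have : {y : Y | (x, y) ∈ C} = ∅ := Set.eq_empty_of_isEmpty _
        rw [this]; exact h0
      rw [this]; exact @MeasurableSet.empty _ (measAlg I)
    · have : {x : X | {y : Y | (x, y) ∈ C} ∉ J} = Set.univ := by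
        ext x
        simp only [Set.mem_setOf_eq, Set.mem_univ, iff_true]
        have : {y : Y | (x, y) ∈ C} = ∅ := Set.eq_empty_of_isEmpty _
        rw [this]; exact h0
      rw [this]; exact @MeasurableSet.univ _ (measAlg I)
  rw [not_isEmpty_iff] at hYe
  -- now both spaces are nonempty, so ∅ ∈ I and ∅ ∈ J
  have hIempty : (∅ : Set X) ∈ I :=
    hI.2.1 {hXe.some} (hI.1 _) ∅ (Set.empty_subset _)
  have hJempty : (∅ : Set Y) ∈ J :=
    hJ.2.1 {hYe.some} (hJ.1 _) ∅ (Set.empty_subset _)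
  -- membership in I gives measurability in measAlg I
  have hImeas : ∀ A ∈ I, MeasurableSet[measAlg I] A := fun A hA =>
    MeasurableSpace.measurableSet_generateFrom (Or.inr hA)
  -- the key invariant: C differs from a Borel set by an (I ⊗ J)-small symmetric difference,
  -- recorded slice-wise
  set P : Set (X × Y) → Prop := fun C =>
    ∃ B : Set (X × Y), MeasurableSet B ∧
      {x : X | ({y : Y | (x, y) ∈ C} \ {y : Y | (x, y) ∈ B} ∪
                {y : Y | (x, y) ∈ B} \ {y : Y | (x, y) ∈ C}) ∉ J} ∈ I with hP
  have hPC : P C := by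
    refine MeasurableSpace.generateFrom_induction
      ({s : Set (X × Y) | MeasurableSet s} ∪ FubiniProd I J) (fun s _ => P s) ?_ ?_ ?_ ?_ C hC
    · -- generators
      rintro t (ht | ht) _
      · -- Borel sets: take B = t
        refine ⟨t, ht, ?_⟩
        have : {x : X | ({y : Y | (x, y) ∈ t} \ {y : Y | (x, y) ∈ t} ∪
            {y : Y | (x, y) ∈ t} \ {y : Y | (x, y) ∈ t}) ∉ J} = ∅ := by
          ext x; simp [hJempty]
        rw [this]; exact hIempty
      · -- members of the Fubini product: take B = ∅
        obtain ⟨D, hD, htD, hDI⟩ := ht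
        refine ⟨∅, MeasurableSet.empty, ?_⟩
        refine hI.2.1 _ hDI _ ?_
        intro x hx
        simp only [Set.mem_setOf_eq] at hx ⊢
        intro hDx
        apply hx
        refine hJ.2.1 _ hDx _ ?_
        intro y hy
        simp only [Set.mem_empty_iff_false, Set.mem_union, Set.mem_diff, Set.mem_setOf_eq] at hy
        rcases hy with ⟨hy, _⟩ | ⟨hy, _⟩
        · exact htD hy
        · exact hy.elim
    · -- empty set
      refine ⟨∅, MeasurableSet.empty, ?_⟩
      have : {x : X | ({y : Y | (x, y) ∈ (∅ : Set (X × Y))} \ {y : Y | (x, y) ∈ (∅ : Set (X × Y))} ∪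
          {y : Y | (x, y) ∈ (∅ : Set (X × Y))} \ {y : Y | (x, y) ∈ (∅ : Set (X × Y))}) ∉ J} = ∅ := by
        ext x; simp [hJempty]
      rw [this]; exact hIempty
    · -- complements
      rintro t _ ⟨B, hB, hBI⟩
      refine ⟨Bᶜ, hB.compl, ?_⟩
      refine hI.2.1 _ hBI _ ?_
      intro x hx
      simp only [Set.mem_setOf_eq] at hx ⊢
      intro hmem
      apply hx
      have : ({y : Y | (x, y) ∈ tᶜ} \ {y : Y | (x, y) ∈ Bᶜ} ∪
          {y : Y | (x, y) ∈ Bᶜ} \ {y : Y | (x, y) ∈ tᶜ}) =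
          ({y : Y | (x, y) ∈ t} \ {y : Y | (x, y) ∈ B} ∪
          {y : Y | (x, y) ∈ B} \ {y : Y | (x, y) ∈ t}) := by
        ext y
        simp only [Set.mem_union, Set.mem_diff, Set.mem_setOf_eq, Set.mem_compl_iff]
        tauto
      exact hJ.2.1 _ hmem _ this.subset
    · -- countable unions
      rintro f _ hf
      choose B hBmeas hBI using hf
      refine ⟨⋃ n, B n, MeasurableSet.iUnion hBmeas, ?_⟩
      refine hI.2.1 _ (hI.2.2 _ hBI) _ ?_
      intro x hx
      simp only [Set.mem_setOf_eq] at hx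
      rw [Set.mem_iUnion]
      by_contra hcon
      push_neg at hcon
      have hall : ∀ n, ({y : Y | (x, y) ∈ f n} \ {y : Y | (x, y) ∈ B n} ∪
          {y : Y | (x, y) ∈ B n} \ {y : Y | (x, y) ∈ f n}) ∈ J := by
        intro n
        have := hcon n
        simpa [Set.mem_setOf_eq, not_not] using this
      have hsub : ({y : Y | (x, y) ∈ ⋃ n, f n} \ {y : Y | (x, y) ∈ ⋃ n, B n} ∪
          {y : Y | (x, y) ∈ ⋃ n, B n} \ {y : Y | (x, y) ∈ ⋃ n, f n}) ⊆
          ⋃ n, ({y : Y | (x, y) ∈ f n} \ {y : Y | (x, y) ∈ B n} ∪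
            {y : Y | (x, y) ∈ B n} \ {y : Y | (x, y) ∈ f n}) := by
        intro y hy
        simp only [Set.mem_union, Set.mem_diff, Set.mem_setOf_eq, Set.mem_iUnion] at hy ⊢
        rcases hy with ⟨⟨n, hn⟩, hnB⟩ | ⟨⟨n, hn⟩, hnf⟩
        · exact ⟨n, Or.inl ⟨hn, fun hB' => hnB ⟨n, hB'⟩⟩⟩
        · exact ⟨n, Or.inr ⟨hn, fun hf' => hnf ⟨n, hf'⟩⟩⟩
      exact hx (hJ.2.1 _ (hJ.2.2 _ hall) _ hsub)
  -- conclude from the invariant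
  obtain ⟨B, hB, hS⟩ := hPC
  set S := {x : X | ({y : Y | (x, y) ∈ C} \ {y : Y | (x, y) ∈ B} ∪
      {y : Y | (x, y) ∈ B} \ {y : Y | (x, y) ∈ C}) ∉ J} with hSdef
  set A := {x : X | {y : Y | (x, y) ∈ C} ∉ J} with hA
  set Bs := {x : X | {y : Y | (x, y) ∈ B} ∉ J} with hBs
  have hBsmeas : MeasurableSet[measAlg I] Bs := h B hB
  -- the slices of C and B are J-equivalent off the I-small set S
  have hiff : ∀ x ∉ S, ({y : Y | (x, y) ∈ C} ∈ J ↔ {y : Y | (x, y) ∈ B} ∈ J) := by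
    intro x hx
    simp only [hSdef, Set.mem_setOf_eq, not_not] at hx
    constructor
    · intro hCx
      refine hJ.2.1 _ (hJ.union hCx hx) _ ?_
      intro y hy
      simp only [Set.mem_union, Set.mem_diff, Set.mem_setOf_eq]
      by_cases hyC : (x, y) ∈ C
      · exact Or.inl hyC
      · exact Or.inr (Or.inr ⟨hy, hyC⟩)
    · intro hBx
      refine hJ.2.1 _ (hJ.union hBx hx) _ ?_
      intro y hy
      simp only [Set.mem_union, Set.mem_diff, Set.mem_setOf_eq]
      by_cases hyB : (x, y) ∈ B
      · exact Or.inl hyB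
      · exact Or.inr (Or.inl ⟨hy, hyB⟩)
  have h1 : A \ Bs ∈ I := by
    refine hI.2.1 _ hS _ ?_
    intro x hx
    rcases hx with ⟨hxA, hxB⟩
    simp only [hA, Set.mem_setOf_eq] at hxA
    simp only [hBs, Set.mem_setOf_eq, not_not] at hxB
    by_contra hxS
    exact hxA ((hiff x hxS).2 hxB)
  have h2 : Bs \ A ∈ I := by
    refine hI.2.1 _ hS _ ?_
    intro x hx
    rcases hx with ⟨hxB, hxA⟩
    simp only [hBs, Set.mem_setOf_eq] at hxB
    simp only [hA, Set.mem_setOf_eq, not_not] at hxA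
    by_contra hxS
    exact hxB ((hiff x hxS).1 hxA)
  have hdecomp : A = (Bs ∪ (A \ Bs)) \ (Bs \ A) := by
    ext x
    simp only [Set.mem_diff, Set.mem_union]
    tauto
  rw [hdecomp]
  exact ((hBsmeas.union (hImeas _ h1)).diff (hImeas _ h2))
end

section
/- Let (X,+) be an Abelian Polish group and let I be a proper σ-ideal on X with Borel base possessing the Weaker Smital Property. Then the following are equivalent: (i) for every family {B_α : α < ω₁} of Borel I-positive subsets of X there exists W ⊆ ω₁ of cardinality ℵ₁ such that ⋂_{α∈W} B_α ≠ ∅; (ii) cov(I) > ω₁, i.e. X is not the union of ℵ₁-many members of I. -/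
open scoped Pointwise

/-- The Weaker Smital Property. -/
def WSP {X : Type*} [TopologicalSpace X] [AddCommGroup X] [MeasurableSpace X]
    (I : Set (Set X)) : Prop :=
  ∃ D : Set X, D.Countable ∧ Dense D ∧
    ∀ B : Set X, MeasurableSet B → B ∉ I → (D + B)ᶜ ∈ I

/-!
If `X` is covered by members `A α` (`α < ω₁`) of `I`, the complements of Borel hulls of the
increasing unions `⋃ β ≤ α, A β` form an `ω₁`-family of Borel `I`-positive sets of which no
uncountable subfamily has a common point. Conversely, if `cov(I) > ω₁`, some `x` lies in every
`D + B α`, whose complements are in `I` by the Weaker Smital Property. Writing `x = d α + b α`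
with `d α` in the countable set `D`, some `d` equals `d α` for uncountably many `α`, and `x - d`
lies in all those `B α`.
-/

open Set Cardinal

universe u v

namespace IsSigmaIdeal

variable {X ι : Type*} {I : Set (Set X)}

theorem biUnion_mem (hI : IsSigmaIdeal I) {s : Set ι} (hs : s.Countable) (hne : s.Nonempty)
    {f : ι → Set X} (hf : ∀ i ∈ s, f i ∈ I) : ⋃ i ∈ s, f i ∈ I := by
  obtain ⟨e, rfl⟩ := hs.exists_eq_range hne
  rw [biUnion_range]
  exact hI.2.2 _ fun n => hf _ ⟨n, rfl⟩

theorem compl_notMem (hI : IsSigmaIdeal I) (hproper : Set.univ ∉ I) {A : Set X} (hA : A ∈ I) :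
    Aᶜ ∉ I := by
  intro hAc
  apply hproper
  have h := hI.biUnion_mem ((countable_singleton Aᶜ).insert A) (insert_nonempty A {Aᶜ}) (f := id)
    (by rintro _ (rfl | rfl); exacts [hA, hAc])
  rwa [biUnion_pair, id, id, union_compl_self] at h

theorem exists_positive_borel_family_of_iUnion_eq_univ [MeasurableSpace X] [LinearOrder ι]
    (hι : ∀ a : ι, (Iic a).Countable) (hI : IsSigmaIdeal I) (hIb : HasBorelBase I)
    (hproper : Set.univ ∉ I) {A : ι → Set X} (hA : ∀ a, A a ∈ I) (hcover : ⋃ a, A a = Set.univ) :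
    ∃ B : ι → Set X, (∀ a, MeasurableSet (B a) ∧ B a ∉ I) ∧
      ∀ W : Set ι, ¬ BddAbove W → ⋂ a ∈ W, B a = ∅ := by
  choose H hHm hAH hHI using fun a => hIb (A a) (hA a)
  have hC : ∀ a, ⋃ b ∈ Iic a, H b ∈ I := fun a =>
    hI.biUnion_mem (hι a) nonempty_Iic fun b _ => hHI b
  refine ⟨fun a => (⋃ b ∈ Iic a, H b)ᶜ,
    fun a => ⟨(MeasurableSet.biUnion (hι a) fun b _ => hHm b).compl,
      hI.compl_notMem hproper (hC a)⟩, fun W hW => eq_empty_of_forall_notMem fun x hx => ?_⟩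
  obtain ⟨b, hxb⟩ := mem_iUnion.mp (hcover ▸ mem_univ x)
  obtain ⟨a, haW, hba⟩ := not_bddAbove_iff.mp hW b
  exact mem_iInter₂.mp hx a haW (mem_biUnion hba.le (hAH b hxb))

end IsSigmaIdeal

theorem exists_not_countable_fiber {ι α : Type*} [Uncountable ι] {f : ι → α}
    (hf : (range f).Countable) : ∃ a, ¬ (f ⁻¹' {a}).Countable := by
  by_contra! h
  refine not_countable_univ (α := ι) ?_
  rw [← preimage_range f, ← biUnion_preimage_singleton]
  exact hf.biUnion fun a _ => h a

theorem exists_not_countable_iInter_nonempty_of_countable_add {G ι : Type*} [AddGroup G]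
    [Uncountable ι] {D : Set G} (hD : D.Countable) {B : ι → Set G} (hx : (⋂ i, D + B i).Nonempty) :
    ∃ W : Set ι, ¬ W.Countable ∧ (⋂ i ∈ W, B i).Nonempty := by
  obtain ⟨x, hx⟩ := hx
  choose d hdD b hb hdb using fun i => mem_add.mp (mem_iInter.mp hx i)
  obtain ⟨e, he⟩ := exists_not_countable_fiber (f := d) (hD.mono (range_subset_iff.mpr hdD))
  refine ⟨d ⁻¹' {e}, he, -e + x, mem_iInter₂.mpr fun i hi => ?_⟩
  rw [← (mem_singleton_iff.mp hi : d i = e), ← hdb, neg_add_cancel_left]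
  exact hb i

instance : Uncountable (ℵ₁ : Cardinal.{v}).ord.ToType :=
  aleph0_lt_mk_iff.mp (by simp)

theorem countable_Iic_toType_ord_aleph_one (a : (ℵ₁ : Cardinal.{v}).ord.ToType) :
    (Iic a).Countable := by
  rw [← Iio_insert]
  have hIio : #(Iio a) < ℵ₁ := by simpa using mk_Iio_lt a
  exact (le_aleph0_iff_set_countable.mp (lt_aleph_one_iff.mp hIio)).insert a

theorem mk_eq_aleph_one_iff_not_countable (W : Set (ℵ₁ : Cardinal.{v}).ord.ToType) :
    #W = ℵ₁ ↔ ¬ W.Countable := by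
  rw [← le_aleph0_iff_set_countable, not_le, ← aleph_one_le_iff]
  exact ⟨ge_of_eq, fun h => le_antisymm ((mk_set_le W).trans_eq (mk_ord_toType _)) h⟩

theorem mk_range_le_aleph_one {α : Type u} (f : (ℵ₁ : Cardinal.{v}).ord.ToType → α) :
    #(range f) ≤ ℵ₁ := by
  simpa using mk_range_le_lift (f := f)

theorem exists_range_eq_of_mk_le_aleph_one {α : Type u} {s : Set α} (hne : s.Nonempty)
    (hs : #s ≤ ℵ₁) : ∃ g : (ℵ₁ : Cardinal.{v}).ord.ToType → α, range g = s := by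
  have : Nonempty s := hne.to_subtype
  obtain ⟨e⟩ := lift_mk_le'.mp (by simpa using hs :
    lift.{v} #s ≤ lift.{u} #(ℵ₁ : Cardinal.{v}).ord.ToType)
  refine ⟨Subtype.val ∘ Function.invFun e, ?_⟩
  rw [range_comp, (Function.invFun_surjective e.injective).range_eq, image_univ,
    Subtype.range_coe]

theorem uncountable_intersection_iff_cov_gt_omega1_general
    {X : Type*} [TopologicalSpace X] [AddCommGroup X] [MeasurableSpace X]
    (I : Set (Set X))
    (hI : IsSigmaIdeal I) (hIb : HasBorelBase I) (hproper : Set.univ ∉ I)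
    (hwsp : WSP I) :
    (∀ B : (Cardinal.aleph 1).ord.ToType → Set X,
        (∀ α, MeasurableSet (B α) ∧ B α ∉ I) →
        ∃ W : Set (Cardinal.aleph 1).ord.ToType,
          Cardinal.mk W = Cardinal.aleph 1 ∧ (⋂ α ∈ W, B α).Nonempty) ↔
    ¬ (∃ 𝒜 : Set (Set X), 𝒜 ⊆ I ∧ Cardinal.mk 𝒜 ≤ Cardinal.aleph 1 ∧ ⋃₀ 𝒜 = Set.univ) := by
  obtain ⟨D, hDc, -, hD⟩ := hwsp
  constructor
  · rintro h ⟨𝒜, h𝒜I, h𝒜c, h𝒜u⟩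
    obtain ⟨-, -, x, -⟩ := h (fun _ => Set.univ) fun _ => ⟨MeasurableSet.univ, hproper⟩
    have : Nonempty X := ⟨x⟩
    obtain ⟨A, rfl⟩ := exists_range_eq_of_mk_le_aleph_one (.of_sUnion_eq_univ h𝒜u) h𝒜c
    obtain ⟨B, hB, hBW⟩ := hI.exists_positive_borel_family_of_iUnion_eq_univ
      countable_Iic_toType_ord_aleph_one hIb hproper (fun a => h𝒜I ⟨a, rfl⟩)
      (by rwa [sUnion_range] at h𝒜u)
    obtain ⟨W, hW, hWne⟩ := h B hB
    refine hWne.ne_empty (hBW W fun ⟨b, hb⟩ => ?_)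
    exact (mk_eq_aleph_one_iff_not_countable W).mp hW
      ((countable_Iic_toType_ord_aleph_one b).mono hb)
  · intro hcov B hB
    have hx : (⋂ α, D + B α).Nonempty := by
      refine nonempty_iff_ne_empty.mpr fun hempty => hcov ⟨range fun α => (D + B α)ᶜ, ?_,
        mk_range_le_aleph_one _, ?_⟩
      · rintro _ ⟨α, rfl⟩
        exact hD _ (hB α).1 (hB α).2
      · rw [sUnion_range, ← compl_iInter, hempty, compl_empty]
    obtain ⟨W, hW, hWne⟩ := exists_not_countable_iInter_nonempty_of_countable_add hDc hx
    exact ⟨W, (mk_eq_aleph_one_iff_not_countable W).mpr hW, hWne⟩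

/-- for a proper σ-ideal with Borel base and WSP, the following are equivalent:
(i) every ω₁-indexed family of Borel `I`-positive sets admits an uncountable subfamily with
nonempty intersection; (ii) `cov(I) > ω₁`. -/
theorem uncountable_intersection_iff_cov_gt_omega1
    {X : Type*} [TopologicalSpace X] [PolishSpace X] [AddCommGroup X]
    [IsTopologicalAddGroup X] [MeasurableSpace X] [BorelSpace X]
    (I : Set (Set X))
    (hI : IsSigmaIdeal I) (hIb : HasBorelBase I) (hproper : Set.univ ∉ I)
    (hwsp : WSP I) :
    (∀ B : (Cardinal.aleph 1).ord.ToType → Set X,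
        (∀ α, MeasurableSet (B α) ∧ B α ∉ I) →
        ∃ W : Set (Cardinal.aleph 1).ord.ToType,
          Cardinal.mk W = Cardinal.aleph 1 ∧ (⋂ α ∈ W, B α).Nonempty) ↔
    ¬ (∃ 𝒜 : Set (Set X), 𝒜 ⊆ I ∧ Cardinal.mk 𝒜 ≤ Cardinal.aleph 1 ∧ ⋃₀ 𝒜 = Set.univ) :=
  uncountable_intersection_iff_cov_gt_omega1_general I hI hIb hproper hwsp
end

section
/- There exists a Borel set B ⊆ ℝ² with B ∉ [ℝ]^{≤ω} ⊗ [ℝ]^{≤ω} such that there are no uncountable Borel sets A₁, A₂ ⊆ ℝ and no set K ∈ [ℝ]^{≤ω} ⊗ [ℝ]^{≤ω} with (A₁ × A₂) \ K ⊆ B. In particular, the pair (Bor(ℝ²), [ℝ]^{≤ω} ⊗ [ℝ]^{≤ω}) does not have the positive rectangle property. -/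
/-- The Fubini product `[ℝ]^{≤ω} ⊗ [ℝ]^{≤ω}` of the σ-ideal of countable sets with itself. -/
def ctblFubini : Set (Set (ℝ × ℝ)) :=
  {K | ∃ C : Set (ℝ × ℝ), MeasurableSet C ∧ K ⊆ C ∧
    {x : ℝ | ¬ ({y : ℝ | (x, y) ∈ C}).Countable}.Countable}

/-- The positive rectangle property for the pair `(Bor(ℝ²), [ℝ]^{≤ω} ⊗ [ℝ]^{≤ω})`. -/
def ctblPRP : Prop :=
  ∀ C : Set (ℝ × ℝ), MeasurableSet C → C ∉ ctblFubini →
    ∃ A₁ A₂ : Set ℝ, MeasurableSet A₁ ∧ MeasurableSet A₂ ∧ (A₁ ×ˢ A₂) ∉ ctblFubini ∧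
      ∃ K ∈ ctblFubini, A₁ ×ˢ A₂ ⊆ C ∪ K

/-- A Borel isomorphism between `ℝ` and `ℝ × ℝ`. -/
noncomputable def realPairEquiv : ℝ ≃ᵐ (ℝ × ℝ) :=
  PolishSpace.measurableEquivOfNotCountable
    (by
      intro h
      exact Cardinal.not_countable_real (Set.to_countable _))
    (by
      intro h
      have : Countable ℝ := (Prod.fst_surjective : Function.Surjective (Prod.fst : ℝ × ℝ → ℝ)).countable
      exact Cardinal.not_countable_real (Set.to_countable _))

/-- The witness set: `B = {(x, y) | (e y).1 = x}`, whose vertical sections are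
uncountable and pairwise disjoint. -/
noncomputable def badSet : Set (ℝ × ℝ) :=
  {p | (realPairEquiv p.2).1 = p.1}

lemma badSet_measurable : MeasurableSet badSet :=
  measurableSet_eq_fun (measurable_fst.comp (realPairEquiv.measurable.comp measurable_snd))
    measurable_fst

lemma badSet_section_uncountable (x : ℝ) : ¬ ({y : ℝ | (x, y) ∈ badSet}).Countable := by
  intro h
  have hset : {y : ℝ | (x, y) ∈ badSet} = realPairEquiv ⁻¹' ({x} ×ˢ Set.univ) := by
    ext y
    simp only [badSet, Set.mem_setOf_eq, Set.mem_preimage, Set.mem_prod,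
      Set.mem_singleton_iff, Set.mem_univ, and_true]
  rw [hset] at h
  have himg : ((realPairEquiv : ℝ → ℝ × ℝ) '' (realPairEquiv ⁻¹' ({x} ×ˢ Set.univ))).Countable :=
    h.image _
  rw [Set.image_preimage_eq _ realPairEquiv.surjective] at himg
  have : (Set.univ : Set ℝ).Countable := by
    have := himg.image Prod.snd
    have hsnd : Prod.snd '' ({x} ×ˢ (Set.univ : Set ℝ)) = Set.univ := by
      ext y; simp
    rwa [hsnd] at this
  exact Cardinal.not_countable_real (by simpa using this)

lemma uncountable_diff {A N : Set ℝ} (hA : ¬ A.Countable) (hN : N.Countable) :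
    ¬ (A \ N).Countable := by
  intro h
  exact hA ((h.union hN).mono (fun x hx => by
    by_cases hxN : x ∈ N
    · exact Or.inr hxN
    · exact Or.inl ⟨hx, hxN⟩))

/-- No uncountable rectangle is almost contained in `badSet`. -/
lemma no_rectangle {A₁ A₂ : Set ℝ} (h₁ : ¬ A₁.Countable) (h₂ : ¬ A₂.Countable)
    {K : Set (ℝ × ℝ)} (hK : K ∈ ctblFubini) (hsub : (A₁ ×ˢ A₂) \ K ⊆ badSet) : False := by
  obtain ⟨C, _, hKC, hCc⟩ := hK
  -- pick two distinct points of A₁ outside the bad countable set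
  have hA₁' : ¬ (A₁ \ {x : ℝ | ¬ ({y : ℝ | (x, y) ∈ C}).Countable}).Countable :=
    uncountable_diff h₁ hCc
  have hnsub : ¬ (A₁ \ {x : ℝ | ¬ ({y : ℝ | (x, y) ∈ C}).Countable}).Subsingleton := by
    intro h; exact hA₁' h.countable
  rw [Set.not_subsingleton_iff] at hnsub
  obtain ⟨x₁, hx₁, x₂, hx₂, hne⟩ := hnsub
  have hC₁ : ({y : ℝ | (x₁, y) ∈ C}).Countable := not_not.mp hx₁.2
  have hC₂ : ({y : ℝ | (x₂, y) ∈ C}).Countable := not_not.mp hx₂.2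
  -- pick a point of A₂ outside both sections
  have hA₂' : ¬ (A₂ \ ({y : ℝ | (x₁, y) ∈ C} ∪ {y : ℝ | (x₂, y) ∈ C})).Countable :=
    uncountable_diff h₂ (hC₁.union hC₂)
  have hne2 : (A₂ \ ({y : ℝ | (x₁, y) ∈ C} ∪ {y : ℝ | (x₂, y) ∈ C})).Nonempty := by
    rcases Set.eq_empty_or_nonempty (A₂ \ ({y : ℝ | (x₁, y) ∈ C} ∪ {y : ℝ | (x₂, y) ∈ C})) with h | h
    · exact absurd (h ▸ Set.countable_empty) hA₂'
    · exact h
  obtain ⟨y, hyA, hyC⟩ := hne2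
  have hb : ∀ x ∈ A₁, y ∉ {y : ℝ | (x, y) ∈ C} → (x, y) ∈ badSet := by
    intro x hxA hxC
    apply hsub
    refine ⟨⟨hxA, hyA⟩, fun hK' => hxC (hKC hK')⟩
  have e₁ : (realPairEquiv y).1 = x₁ := hb x₁ hx₁.1 (fun h => hyC (Or.inl h))
  have e₂ : (realPairEquiv y).1 = x₂ := hb x₂ hx₂.1 (fun h => hyC (Or.inr h))
  exact hne (e₁ ▸ e₂)

lemma badSet_not_mem : badSet ∉ ctblFubini := by
  rintro ⟨C, _, hBC, hCc⟩
  apply Cardinal.not_countable_real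
  have h : {x : ℝ | ¬ ({y : ℝ | (x, y) ∈ C}).Countable} = Set.univ := by
    ext x
    simp only [Set.mem_setOf_eq, Set.mem_univ, iff_true]
    intro h
    exact badSet_section_uncountable x (h.mono (fun y hy => hBC hy))
  rw [h] at hCc
  simpa using hCc

lemma left_countable_mem {A₁ A₂ : Set ℝ} (hm₁ : MeasurableSet A₁) (h : A₁.Countable) :
    A₁ ×ˢ A₂ ∈ ctblFubini := by
  refine ⟨A₁ ×ˢ (Set.univ : Set ℝ), hm₁.prod MeasurableSet.univ,
    Set.prod_mono_right (Set.subset_univ _), h.mono ?_⟩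
  intro x hx
  by_contra hxA
  apply hx
  have hempty : {y : ℝ | (x, y) ∈ A₁ ×ˢ (Set.univ : Set ℝ)} = ∅ := by
    ext y; simp [hxA]
  exact hempty ▸ Set.countable_empty

lemma right_countable_mem {A₁ A₂ : Set ℝ} (hm₂ : MeasurableSet A₂) (h : A₂.Countable) :
    A₁ ×ˢ A₂ ∈ ctblFubini := by
  refine ⟨(Set.univ : Set ℝ) ×ˢ A₂, MeasurableSet.univ.prod hm₂,
    Set.prod_mono_left (Set.subset_univ _), Set.Countable.mono ?_ Set.countable_empty⟩
  intro x hx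
  exact hx (h.mono (fun y hy => hy.2))

/-- there is a Borel set `B ⊆ ℝ²` positive with respect to
`[ℝ]^{≤ω} ⊗ [ℝ]^{≤ω}` which almost-contains no positive rectangle; in particular
`(Bor(ℝ²), [ℝ]^{≤ω} ⊗ [ℝ]^{≤ω})` does not have the positive rectangle property. -/
theorem ctbl_fubini_not_prp :
    (∃ B : Set (ℝ × ℝ), MeasurableSet B ∧ B ∉ ctblFubini ∧
      ¬ ∃ A₁ A₂ : Set ℝ, MeasurableSet A₁ ∧ ¬ A₁.Countable ∧
          MeasurableSet A₂ ∧ ¬ A₂.Countable ∧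
          ∃ K ∈ ctblFubini, (A₁ ×ˢ A₂) \ K ⊆ B) ∧
    ¬ ctblPRP := by
  constructor
  · refine ⟨badSet, badSet_measurable, badSet_not_mem, ?_⟩
    rintro ⟨A₁, A₂, _, h₁, _, h₂, K, hK, hsub⟩
    exact no_rectangle h₁ h₂ hK hsub
  · intro hprp
    obtain ⟨A₁, A₂, hm₁, hm₂, hpos, K, hK, hsub⟩ := hprp badSet badSet_measurable badSet_not_mem
    have h₁ : ¬ A₁.Countable := fun h => hpos (left_countable_mem hm₁ h)
    have h₂ : ¬ A₂.Countable := fun h => hpos (right_countable_mem hm₂ h)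
    apply no_rectangle h₁ h₂ hK
    intro p hp
    rcases hsub hp.1 with h | h
    · exact h
    · exact absurd h hp.2
end

section
/- Every Lebesgue measurable set E ⊆ [0,1]² of positive Lebesgue measure contains a Lebesgue measurable subset E' ⊆ E with λ(E') = λ(E) such that there are no Lebesgue measurable sets A, B ⊆ [0,1] of positive measure with A × B ⊆ E'. -/
open MeasureTheory Pointwise Filter Topology

/-!
Remove from `E` the null set of points whose coordinates differ by a rational number. A rectangle
`A ×ˢ B` of positive measure always meets that set: by Fubini, some translate of `B` meets `A` in
positive measure, so Steinhaus' theorem makes `A - B` a neighbourhood of some point, and hence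
`A - B` contains a rational number.
-/

section
variable {G : Type*} [MeasurableSpace G] [AddCommGroup G] [MeasurableAdd₂ G]
  {μ : Measure G} [SFinite μ] [μ.IsAddRightInvariant] {A B : Set G}

theorem lintegral_measure_inter_preimage_add_const (hA : MeasurableSet A) (hB : MeasurableSet B) :
    ∫⁻ t, μ (A ∩ (· + t) ⁻¹' B) ∂μ = μ B * μ A := by
  have hS : MeasurableSet ((fun p : G × G => (p.1 + p.2, p.2)) ⁻¹' B ×ˢ A) :=
    (measurable_add.prodMk measurable_snd) (hB.prod hA)
  rw [← Measure.prod_prod, ← (measurePreserving_add_prod μ μ).measure_preimage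
    (hB.prod hA).nullMeasurableSet, Measure.prod_apply hS]
  congr 1 with t
  congr 1 with a
  simp [add_comm, and_comm]

theorem exists_measure_inter_preimage_add_const_pos (hA : MeasurableSet A) (hB : MeasurableSet B)
    (hApos : 0 < μ A) (hBpos : 0 < μ B) : ∃ t, 0 < μ (A ∩ (· + t) ⁻¹' B) := by
  by_contra! h
  have hzero : ∫⁻ t, μ (A ∩ (· + t) ⁻¹' B) ∂μ = 0 := by
    simp [fun t => nonpos_iff_eq_zero.mp (h t)]
  rw [lintegral_measure_inter_preimage_add_const hA hB] at hzero
  exact (ENNReal.mul_pos hBpos.ne' hApos.ne').ne' hzero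
end

section
variable {G : Type*} [MeasurableSpace G] [TopologicalSpace G] [BorelSpace G] [AddCommGroup G]
  [IsTopologicalAddGroup G] [LocallyCompactSpace G] [SecondCountableTopology G]
  (μ : Measure G) [μ.IsAddHaarMeasure] {A B : Set G}

theorem exists_sub_mem_nhds_of_measure_pos (hA : MeasurableSet A) (hB : MeasurableSet B)
    (hApos : 0 < μ A) (hBpos : 0 < μ B) : ∃ x, A - B ∈ 𝓝 x := by
  obtain ⟨t, ht⟩ := exists_measure_inter_preimage_add_const_pos hA hB hApos hBpos
  set C := A ∩ (· + t) ⁻¹' B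
  have hC : C - C ∈ 𝓝 0 :=
    μ.sub_mem_nhds_zero_of_addHaar_pos C (hA.inter (measurable_add_const t hB)) ht
  refine ⟨-t, mem_of_superset
    ((continuous_add_const t).tendsto' (-t) 0 (neg_add_cancel t) hC) ?_⟩
  rintro y ⟨c₁, ⟨hc₁, -⟩, c₂, ⟨-, hc₂⟩, hy⟩
  simp only at hy
  exact ⟨c₁, hc₁, c₂ + t, hc₂,
    by simp only [sub_add_eq_sub_sub, hy, add_sub_cancel_right]⟩

theorem interior_sub_nonempty_of_measure_pos (hA : NullMeasurableSet A μ)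
    (hB : NullMeasurableSet B μ) (hApos : 0 < μ A) (hBpos : 0 < μ B) :
    (interior (A - B)).Nonempty := by
  obtain ⟨A', hA'A, hA', hAA'⟩ := hA.exists_measurable_subset_ae_eq
  obtain ⟨B', hB'B, hB', hBB'⟩ := hB.exists_measurable_subset_ae_eq
  obtain ⟨x, hx⟩ := exists_sub_mem_nhds_of_measure_pos μ hA' hB' (by rwa [measure_congr hAA'])
    (by rwa [measure_congr hBB'])
  exact ⟨x, interior_mono (Set.sub_subset_sub hA'A hB'B) (mem_interior_iff_mem_nhds.mpr hx)⟩
end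

section
variable {G : Type*} [MeasurableSpace G] [AddGroup G] [MeasurableSingletonClass G]
  [MeasurableSub₂ G] {μ ν : Measure G} [SFinite ν] [NullSingletonClass ν] {S : Set G}

theorem Set.Countable.measure_setOf_sub_mem (hS : S.Countable) :
    μ.prod ν {p | p.1 - p.2 ∈ S} = 0 := by
  have hm : MeasurableSet {p : G × G | p.1 - p.2 ∈ S} :=
    measurable_fst.sub measurable_snd hS.measurableSet
  rw [Measure.prod_apply hm]
  refine lintegral_eq_zero_of_ae_eq_zero (ae_of_all _ fun x => ?_)
  exact (hS.preimage (sub_right_injective (b := x))).measure_zero ν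
end

theorem exists_full_subset_without_positive_rectangle_general
    (E : Set (ℝ × ℝ))
    (hEm : NullMeasurableSet E volume) :
    ∃ E' : Set (ℝ × ℝ), E' ⊆ E ∧ NullMeasurableSet E' volume ∧ volume E' = volume E ∧
      ∀ A B : Set ℝ, A ⊆ Set.Icc 0 1 → B ⊆ Set.Icc 0 1 →
        NullMeasurableSet A volume → NullMeasurableSet B volume →
        0 < volume A → 0 < volume B → ¬ (A ×ˢ B ⊆ E') := by
  set D := {p : ℝ × ℝ | p.1 - p.2 ∈ Set.range ((↑) : ℚ → ℝ)}
  have hD : volume D = 0 := (Set.countable_range _).measure_setOf_sub_mem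
  refine ⟨E \ D, Set.sdiff_subset, hEm.diff (.of_null hD), measure_sdiff_null hD, ?_⟩
  intro A B _ _ hA hB hApos hBpos hAB
  obtain ⟨q, hq⟩ := Rat.denseRange_cast.exists_mem_open isOpen_interior
    (interior_sub_nonempty_of_measure_pos volume hA hB hApos hBpos)
  obtain ⟨a, ha, b, hb, hab⟩ := interior_subset hq
  exact (hAB (Set.mk_mem_prod ha hb)).2 ⟨q, hab.symm⟩

/-- every Lebesgue measurable set `E ⊆ [0,1]²` of positive measure contains a
measurable subset of the same measure containing no rectangle of positive measure. -/
theorem exists_full_subset_without_positive_rectangle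
    (E : Set (ℝ × ℝ)) (hE : E ⊆ Set.Icc 0 1 ×ˢ Set.Icc 0 1)
    (hEm : NullMeasurableSet E volume) (hEpos : 0 < volume E) :
    ∃ E' : Set (ℝ × ℝ), E' ⊆ E ∧ NullMeasurableSet E' volume ∧ volume E' = volume E ∧
      ∀ A B : Set ℝ, A ⊆ Set.Icc 0 1 → B ⊆ Set.Icc 0 1 →
        NullMeasurableSet A volume → NullMeasurableSet B volume →
        0 < volume A → 0 < volume B → ¬ (A ×ˢ B ⊆ E') :=
  exists_full_subset_without_positive_rectangle_general E hEm
end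

section
/- The pair (Bor(ℝ²), N) does not have the positive rectangle property: there exists a Borel set C ⊆ ℝ² of positive two-dimensional Lebesgue measure such that for all Borel sets A, B ⊆ ℝ of positive Lebesgue measure, the set (A × B) \ C has positive two-dimensional Lebesgue measure; equivalently, there is no Lebesgue null set K ⊆ ℝ² with A × B ⊆ C ∪ K. -/
open MeasureTheory

/-!
Let `U ⊆ ℝ` be a dense open set of finite measure and `C = {(x, y) | x - y ∉ U}`; since `Uᶜ` has
positive measure, so does `C`. In the coordinates `(x - y, y)` Fubini gives
`|(A × B) ∩ {x - y ∈ U}| = ∫_U |B ∩ (A - t)| dt`. Shrinking `A` to a compact set, continuity of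
translation in measure makes the integrand lower semicontinuous; as its total integral is
`|A| |B| > 0`, it is positive on a nonempty open set, which the dense set `U` meets in positive
measure.
-/

open Filter Set Topology
open scoped Pointwise

theorem exists_isOpen_dense_measure_lt {X : Type*} [TopologicalSpace X]
    [TopologicalSpace.SeparableSpace X] [MeasurableSpace X] (μ : Measure X) [μ.OuterRegular]
    [NullSingletonClass μ] {ε : ENNReal} (hε : 0 < ε) : ∃ U, IsOpen U ∧ Dense U ∧ μ U < ε := by
  obtain ⟨D, hDc, hDd⟩ := TopologicalSpace.exists_countable_dense X
  obtain ⟨U, hDU, hU, hμU⟩ := D.exists_isOpen_lt_of_lt ε (by rwa [hDc.measure_zero μ])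
  exact ⟨U, hU, hDd.mono hDU, hμU⟩

section AddGroup

variable {G : Type*} [AddGroup G] [MeasurableSpace G]

theorem measure_prod_inter_preimage_sub [MeasurableAdd₂ G] [MeasurableNeg G] (μ : Measure G)
    [SFinite μ] [μ.IsAddRightInvariant] {A B W : Set G} (hA : MeasurableSet A)
    (hB : MeasurableSet B) (hW : MeasurableSet W) :
    (μ.prod μ) ((A ×ˢ B) ∩ (fun p => p.1 - p.2) ⁻¹' W) =
      ∫⁻ t in W, μ (B ∩ (t + ·) ⁻¹' A) ∂μ := by
  set T : Set (G × G) := (W ×ˢ B) ∩ (fun q => q.1 + q.2) ⁻¹' A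
  have hT : MeasurableSet T := (hW.prod hB).inter (measurable_add hA)
  have hpre : (A ×ˢ B) ∩ (fun p => p.1 - p.2) ⁻¹' W = (fun p => (p.1 - p.2, p.2)) ⁻¹' T := by
    ext p
    simp only [T, mem_inter_iff, mem_prod, mem_preimage, sub_add_cancel]
    tauto
  rw [hpre, (measurePreserving_sub_prod μ μ).measure_preimage hT.nullMeasurableSet,
    Measure.prod_apply hT, ← lintegral_indicator hW]
  congr 1 with t
  by_cases ht : t ∈ W <;> simp [T, ht, Set.preimage, Set.inter_def]

theorem measurable_measure_inter_preimage_add [MeasurableAdd₂ G] (μ : Measure G) [SFinite μ]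
    {A B : Set G} (hA : MeasurableSet A) (hB : MeasurableSet B) :
    Measurable fun t => μ (B ∩ (t + ·) ⁻¹' A) := by
  convert measurable_measure_prodMk_left (ν := μ)
    ((MeasurableSet.univ.prod hB).inter (measurable_add hA)) using 3 with t
  ext y
  simp

theorem eventually_measure_inter_preimage_add_pos [TopologicalSpace G] [BorelSpace G]
    [IsTopologicalAddGroup G] [LocallyCompactSpace G] (μ : Measure G) [μ.IsAddLeftInvariant]
    [IsFiniteMeasureOnCompacts μ] [μ.InnerRegularCompactLTTop] {K : Set G} (hK : IsCompact K)
    (hKc : IsClosed K) (B : Set G) {t₀ : G} (ht₀ : 0 < μ (B ∩ (t₀ + ·) ⁻¹' K)) :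
    ∀ᶠ t in 𝓝 t₀, 0 < μ (B ∩ (t + ·) ⁻¹' K) := by
  have hsmall : Tendsto (fun t => μ (((t - t₀) +ᵥ K) \ K)) (𝓝 t₀) (𝓝 0) :=
    (tendsto_measure_vadd_sdiff_isCompact_isClosed hK hKc).comp
      (by simpa using (continuous_sub_right t₀).tendsto t₀)
  filter_upwards [hsmall.eventually (gt_mem_nhds ht₀)] with t ht
  have hcover : B ∩ (t₀ + ·) ⁻¹' K ⊆
      (B ∩ (t + ·) ⁻¹' K) ∪ (t + ·) ⁻¹' (((t - t₀) +ᵥ K) \ K) := by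
    rintro y ⟨hyB, hyK⟩
    by_cases htyK : t + y ∈ K
    · exact Or.inl ⟨hyB, htyK⟩
    · exact Or.inr ⟨⟨t₀ + y, hyK, by simp [sub_eq_add_neg, add_assoc]⟩, htyK⟩
  refine pos_iff_ne_zero.2 fun h0 => (ht.trans_le ?_).false
  calc μ (B ∩ (t₀ + ·) ⁻¹' K)
      ≤ μ (B ∩ (t + ·) ⁻¹' K) + μ ((t + ·) ⁻¹' (((t - t₀) +ᵥ K) \ K)) :=
        (measure_mono hcover).trans (measure_union_le _ _)
    _ = μ (((t - t₀) +ᵥ K) \ K) := by rw [h0, zero_add, measure_preimage_add]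

end AddGroup

theorem measure_prod_inter_preimage_sub_pos {G : Type*} [AddCommGroup G] [MeasurableSpace G]
    [TopologicalSpace G] [BorelSpace G] [IsTopologicalAddGroup G] [LocallyCompactSpace G]
    [T2Space G] [SecondCountableTopology G] (μ : Measure G) [μ.IsAddHaarMeasure] [μ.InnerRegular]
    {A B U : Set G} (hA : MeasurableSet A) (hB : MeasurableSet B) (hAμ : 0 < μ A)
    (hBμ : 0 < μ B) (hU : IsOpen U) (hUd : Dense U) :
    0 < (μ.prod μ) ((A ×ˢ B) ∩ (fun p => p.1 - p.2) ⁻¹' U) := by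
  obtain ⟨K, hKA, hK, hKμ⟩ := hA.exists_lt_isCompact hAμ
  set f : G → ENNReal := fun t => μ (B ∩ (t + ·) ⁻¹' K)
  have hf : Measurable f := measurable_measure_inter_preimage_add μ hK.measurableSet hB
  have hint : ∫⁻ t, f t ∂μ = μ K * μ B := by
    simpa [Measure.prod_prod] using
      (measure_prod_inter_preimage_sub μ hK.measurableSet hB MeasurableSet.univ).symm
  obtain ⟨t₀, ht₀⟩ : ∃ t₀, 0 < f t₀ := by
    by_contra! h
    have hf0 : f = 0 := funext fun t => nonpos_iff_eq_zero.1 (h t)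
    simp only [hf0, Pi.zero_apply, lintegral_zero] at hint
    exact (ENNReal.mul_pos hKμ.ne' hBμ.ne').ne hint
  obtain ⟨V, hVf, hV, ht₀V⟩ := eventually_nhds_iff.1
    (eventually_measure_inter_preimage_add_pos μ hK hK.isClosed B ht₀)
  have hVU : 0 < μ (V ∩ U) := (hV.inter hU).measure_pos μ (hUd.inter_open_nonempty V hV ⟨t₀, ht₀V⟩)
  calc 0 < ∫⁻ t in U, f t ∂μ :=
        (setLIntegral_pos_iff hf).2 <| hVU.trans_le <|
          measure_mono fun t ⟨htV, htU⟩ => ⟨(hVf t htV).ne', htU⟩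
    _ = (μ.prod μ) ((K ×ˢ B) ∩ (fun p => p.1 - p.2) ⁻¹' U) :=
        (measure_prod_inter_preimage_sub μ hK.measurableSet hB hU.measurableSet).symm
    _ ≤ _ := measure_mono (inter_subset_inter_left _ (prod_mono hKA subset_rfl))

/-- the pair `(Bor(ℝ²), 𝒩)` does not have the positive rectangle property:
there is a Borel set `C ⊆ ℝ²` of positive measure such that every positive Borel rectangle
`A × B` meets the complement of `C` in positive measure; equivalently, no null set `K`
satisfies `A × B ⊆ C ∪ K`. -/
theorem borel_null_not_prp :
    ∃ C : Set (ℝ × ℝ), MeasurableSet C ∧ 0 < volume C ∧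
      ∀ A B : Set ℝ, MeasurableSet A → MeasurableSet B →
        0 < volume A → 0 < volume B →
        0 < volume ((A ×ˢ B) \ C) ∧
        ¬ ∃ K : Set (ℝ × ℝ), volume K = 0 ∧ A ×ˢ B ⊆ C ∪ K := by
  obtain ⟨U, hU, hUd, hUμ⟩ := exists_isOpen_dense_measure_lt (volume : Measure ℝ) one_pos
  have hUc : 0 < volume Uᶜ := by
    refine pos_iff_ne_zero.2 fun h => ?_
    have := measure_univ_le_add_compl (μ := (volume : Measure ℝ)) U
    rw [Real.volume_univ, h, add_zero] at this
    exact hUμ.not_ge (le_top.trans this)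
  refine ⟨(fun p => p.1 - p.2) ⁻¹' Uᶜ, (measurable_fst.sub measurable_snd) hU.measurableSet.compl,
    ?_, fun A B hA hB hAμ hBμ => ?_⟩
  · rw [Measure.volume_eq_prod, ← univ_inter (_ ⁻¹' _), ← univ_prod_univ,
      measure_prod_inter_preimage_sub volume .univ .univ hU.measurableSet.compl]
    simp [ENNReal.top_mul hUc.ne']
  have hpos : 0 < volume ((A ×ˢ B) \ (fun p => p.1 - p.2) ⁻¹' Uᶜ) := by
    rw [preimage_compl, sdiff_compl, Measure.volume_eq_prod]
    exact measure_prod_inter_preimage_sub_pos volume hA hB hAμ hBμ hU hUd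
  exact ⟨hpos, fun ⟨K, hK, hsub⟩ =>
    hpos.ne' (measure_mono_null (fun p hp => (hsub hp.1).resolve_left hp.2) hK)⟩
end

section
/- Let (X,+) and (Y,+) be Abelian Polish groups and let I, J be σ-ideals with Borel bases on X and Y respectively, both possessing the Weaker Smital Property. Assume at least one of the following holds: (i) J is Borel-on-Borel, i.e. for every Borel C ⊆ X×Y the set {x ∈ X : C_x ∉ J} is Borel; (ii) J is measurable-on-measurable, i.e. for every C ∈ σ(Bor(X×Y) ∪ (I⊗J)) the set {x ∈ X : C_x ∉ J} belongs to σ(Bor(X) ∪ I); (iii) the pair (Bor(X×Y), I⊗J) has the positive rectangle property. Then the Fubini product I⊗J has the Weaker Smital Property on the product group X×Y. -/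
/-!
Take `D = D_X ×ˢ D_Y` for the witnesses `D_X`, `D_Y` of WSP for `I` and `J`. Suppose a Borel set
`C ⊆ X × Y` has `J`-positive sections `C_a` for all `a` in a Borel `I`-positive set `A`. For
`x = d + a` with `d ∈ D_X`, `a ∈ A`, the section of `D + C` at `x` contains `D_Y + C_a`, which is
`J`-residual; as `D_X + A` is `I`-residual, `D + C` is `I ⊗ J`-residual.

Each of the three hypotheses supplies such an `A` for every Borel `I ⊗ J`-positive `C`. Under (i)
or (ii), `{x | C_x ∉ J}` is `I`-positive and lies in `σ(Bor(X) ∪ I)`, so it contains a Borel set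
from which it differs by a set in `I`. Under (iii), take the side `A₀` of the positive rectangle
`A₀ × B₀ ⊆ C ∪ K` and remove the `I`-small Borel set of points where `K` has `J`-positive section;
over the remaining points `B₀ ⊆ C_a ∪ K_a` with `B₀ ∉ J` and `K_a ∈ J`.
-/

open MeasureTheory
open scoped Pointwise

open scoped symmDiff

instance Prod.measurableAdd {M N : Type*} [Add M] [Add N] [MeasurableSpace M]
    [MeasurableSpace N] [MeasurableAdd M] [MeasurableAdd N] : MeasurableAdd (M × N) where
  measurable_const_add c := (measurable_const_add c.1).prodMap (measurable_const_add c.2)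
  measurable_add_const c := (measurable_add_const c.1).prodMap (measurable_add_const c.2)

theorem Set.Countable.measurableSet_add {G : Type*} [AddGroup G] [MeasurableSpace G]
    [MeasurableAdd G] {D B : Set G} (hD : D.Countable) (hB : MeasurableSet B) :
    MeasurableSet (D + B) := by
  rw [← Set.iUnion_add_left_image]
  exact .biUnion hD fun d _ => hB.const_vadd d

theorem add_section_subset_section_add {X Y : Type*} [Add X] [Add Y] {Dx : Set X} {Dy : Set Y}
    {C : Set (X × Y)} {d : X} (hd : d ∈ Dx) (a : X) :
    Dy + {y : Y | (a, y) ∈ C} ⊆ {y : Y | (d + a, y) ∈ Dx ×ˢ Dy + C} := by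
  rintro _ ⟨e, he, c, hc, rfl⟩
  exact Set.add_mem_add (show (d, e) ∈ Dx ×ˢ Dy from ⟨hd, he⟩) hc

namespace IsSigmaIdeal

variable {X : Type*} {I : Set (Set X)}

theorem mono (hI : IsSigmaIdeal I) {A B : Set X} (hA : A ∈ I) (hBA : B ⊆ A) : B ∈ I :=
  hI.2.1 A hA B hBA

theorem empty_mem [Nonempty X] (hI : IsSigmaIdeal I) : ∅ ∈ I :=
  hI.mono (hI.1 (Classical.arbitrary X)) (Set.empty_subset _)

theorem iUnion_mem (hI : IsSigmaIdeal I) {f : ℕ → Set X} (hf : ∀ n, f n ∈ I) : ⋃ n, f n ∈ I :=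
  hI.2.2 f hf

theorem union_mem (hI : IsSigmaIdeal I) {A B : Set X} (hA : A ∈ I) (hB : B ∈ I) :
    A ∪ B ∈ I := by
  refine hI.mono (hI.iUnion_mem (f := fun n => if n = 0 then A else B)
    fun n => by split_ifs <;> assumption) ?_
  rintro x (hx | hx)
  · exact Set.mem_iUnion.2 ⟨0, by simpa using hx⟩
  · exact Set.mem_iUnion.2 ⟨1, by simpa using hx⟩

theorem of_diff_mem (hI : IsSigmaIdeal I) {A N : Set X} (hAN : A \ N ∈ I) (hN : N ∈ I) :
    A ∈ I :=
  hI.mono (hI.union_mem hAN hN) (by rw [Set.sdiff_union_self]; exact Set.subset_union_left)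

theorem exists_measurableSet_symmDiff_mem [MeasurableSpace X] [Nonempty X]
    (hI : IsSigmaIdeal I) {S : Set X} (hS : MeasurableSet[measAlg I] S) :
    ∃ T : Set X, MeasurableSet T ∧ T ∆ S ∈ I := by
  induction hS with
  | basic s hs =>
    rcases hs with hs | hs
    · exact ⟨s, hs, by simpa using hI.empty_mem⟩
    · exact ⟨∅, .empty, by rwa [← Set.bot_eq_empty, bot_symmDiff]⟩
  | empty => exact ⟨∅, .empty, by simpa using hI.empty_mem⟩
  | compl s _ ih =>
    obtain ⟨T, hT, hTs⟩ := ih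
    exact ⟨Tᶜ, hT.compl, by rwa [compl_symmDiff_compl]⟩
  | iUnion s _ ih =>
    choose T hT hTs using ih
    exact ⟨⋃ n, T n, .iUnion hT, hI.mono (hI.iUnion_mem hTs) Set.iUnion_symmDiff_iUnion_subset⟩

theorem exists_measurableSet_subset_diff_mem [MeasurableSpace X] [Nonempty X]
    (hI : IsSigmaIdeal I) (hIb : HasBorelBase I) {S : Set X}
    (hS : MeasurableSet[measAlg I] S) :
    ∃ A : Set X, MeasurableSet A ∧ A ⊆ S ∧ S \ A ∈ I := by
  obtain ⟨T, hT, hTS⟩ := hI.exists_measurableSet_symmDiff_mem hS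
  obtain ⟨N, hN, hTSN, hNI⟩ := hIb _ hTS
  refine ⟨T \ N, hT.diff hN, fun x ⟨hxT, hxN⟩ => ?_, hI.mono hNI fun x ⟨hxS, hxTN⟩ => ?_⟩
  · by_contra hxS
    exact hxN (hTSN (Or.inl ⟨hxT, hxS⟩))
  · by_contra hxN
    exact hxTN ⟨not_not.1 fun hxT => hxN (hTSN (Or.inr ⟨hxS, hxT⟩)), hxN⟩

end IsSigmaIdeal

section Fubini

variable {X Y : Type*} [MeasurableSpace X] [MeasurableSpace Y] {I : Set (Set X)}
  {J : Set (Set Y)}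

theorem mem_fubiniProd_of_measurableSet {C : Set (X × Y)} (hC : MeasurableSet C)
    (h : {x : X | {y : Y | (x, y) ∈ C} ∉ J} ∈ I) : C ∈ FubiniProd I J :=
  ⟨C, hC, subset_rfl, h⟩

theorem prod_mem_fubiniProd_of_left_mem [Nonempty Y] (hI : IsSigmaIdeal I)
    (hJ : IsSigmaIdeal J) {A : Set X} {B : Set Y} (hA : MeasurableSet A) (hB : MeasurableSet B)
    (hAI : A ∈ I) : A ×ˢ B ∈ FubiniProd I J := by
  refine mem_fubiniProd_of_measurableSet (hA.prod hB) (hI.mono hAI fun x hx => ?_)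
  by_contra hxA
  exact hx (hJ.mono hJ.empty_mem fun y hy => hxA hy.1)

theorem prod_mem_fubiniProd_of_right_mem [Nonempty X] (hI : IsSigmaIdeal I)
    (hJ : IsSigmaIdeal J) {A : Set X} {B : Set Y} (hA : MeasurableSet A) (hB : MeasurableSet B)
    (hBJ : B ∈ J) : A ×ˢ B ∈ FubiniProd I J :=
  mem_fubiniProd_of_measurableSet (hA.prod hB)
    (hI.mono hI.empty_mem fun _ hx => hx (hJ.mono hBJ fun _ hy => hy.2))

def HasBorelPositiveSections (I : Set (Set X)) (J : Set (Set Y)) : Prop :=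
  ∀ C : Set (X × Y), MeasurableSet C → C ∉ FubiniProd I J →
    ∃ A : Set X, MeasurableSet A ∧ A ∉ I ∧ ∀ x ∈ A, {y : Y | (x, y) ∈ C} ∉ J

theorem hasBorelPositiveSections_of_measAlg [Nonempty X] (hI : IsSigmaIdeal I)
    (hIb : HasBorelBase I)
    (h : ∀ C : Set (X × Y), MeasurableSet C →
      MeasurableSet[measAlg I] {x : X | {y : Y | (x, y) ∈ C} ∉ J}) :
    HasBorelPositiveSections I J := by
  intro C hC hCIJ
  obtain ⟨A, hA, hAS, hSA⟩ := hI.exists_measurableSet_subset_diff_mem hIb (h C hC)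
  exact ⟨A, hA, fun hAI => hCIJ (mem_fubiniProd_of_measurableSet hC (hI.of_diff_mem hSA hAI)),
    hAS⟩

theorem hasBorelPositiveSections_of_positive_rectangle [Nonempty X] [Nonempty Y]
    (hI : IsSigmaIdeal I) (hIb : HasBorelBase I) (hJ : IsSigmaIdeal J)
    (h : ∀ C : Set (X × Y), MeasurableSet C → C ∉ FubiniProd I J →
      ∃ A : Set X, ∃ B : Set Y, MeasurableSet A ∧ MeasurableSet B ∧
        (A ×ˢ B) ∉ FubiniProd I J ∧ ∃ K ∈ FubiniProd I J, A ×ˢ B ⊆ C ∪ K) :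
    HasBorelPositiveSections I J := by
  intro C hC hCIJ
  obtain ⟨A, B, hA, hB, hAB, K, ⟨K', -, hKK', hK'I⟩, hABC⟩ := h C hC hCIJ
  obtain ⟨N, hN, hK'N, hNI⟩ := hIb _ hK'I
  have hAI : A ∉ I := fun hAI => hAB (prod_mem_fubiniProd_of_left_mem hI hJ hA hB hAI)
  have hBJ : B ∉ J := fun hBJ => hAB (prod_mem_fubiniProd_of_right_mem hI hJ hA hB hBJ)
  refine ⟨A \ N, hA.diff hN, fun hANI => hAI (hI.of_diff_mem hANI hNI), ?_⟩
  rintro a ⟨ha, haN⟩ hCa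
  apply hBJ
  have hK'a : {y : Y | (a, y) ∈ K'} ∈ J := not_not.1 fun hK'a => haN (hK'N hK'a)
  exact hJ.mono (hJ.union_mem hCa hK'a) fun y hy => (hABC ⟨ha, hy⟩).imp id (hKK' ·)

theorem wsp_fubiniProd [TopologicalSpace X] [AddCommGroup X] [MeasurableAdd X]
    [TopologicalSpace Y] [AddCommGroup Y] [MeasurableAdd Y]
    (hI : IsSigmaIdeal I) (hJ : IsSigmaIdeal J) (hIwsp : WSP I) (hJwsp : WSP J)
    (hIJ : HasBorelPositiveSections I J) : WSP (FubiniProd I J) := by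
  obtain ⟨Dx, hDx_count, hDx_dense, hDx⟩ := hIwsp
  obtain ⟨Dy, hDy_count, hDy_dense, hDy⟩ := hJwsp
  have hD_count := hDx_count.prod hDy_count
  refine ⟨Dx ×ˢ Dy, hD_count, hDx_dense.prod hDy_dense, fun C hC hCIJ => ?_⟩
  obtain ⟨A, hA, hAI, hAJ⟩ := hIJ C hC hCIJ
  refine mem_fubiniProd_of_measurableSet (hD_count.measurableSet_add hC).compl
    (hI.mono (hDx A hA hAI) ?_)
  rintro _ hxJ ⟨d, hd, a, ha, rfl⟩
  refine hxJ (hJ.mono (hDy _ (hC.preimage measurable_prodMk_left) (hAJ a ha)) ?_)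
  exact fun y hy hyD => hy (add_section_subset_section_add hd a hyD)

end Fubini

theorem fubini_wsp_general
    {X Y : Type*} [TopologicalSpace X] [AddCommGroup X]
    [IsTopologicalAddGroup X] [MeasurableSpace X] [BorelSpace X]
    [TopologicalSpace Y] [AddCommGroup Y]
    [IsTopologicalAddGroup Y] [MeasurableSpace Y] [BorelSpace Y]
    (I : Set (Set X)) (J : Set (Set Y))
    (hI : IsSigmaIdeal I) (hIb : HasBorelBase I)
    (hJ : IsSigmaIdeal J)
    (hIwsp : WSP I) (hJwsp : WSP J)
    (halt :
      (∀ C : Set (X × Y), MeasurableSet C →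
          MeasurableSet {x : X | {y : Y | (x, y) ∈ C} ∉ J}) ∨
      (∀ C : Set (X × Y), MeasurableSet[measAlg (FubiniProd I J)] C →
          MeasurableSet[measAlg I] {x : X | {y : Y | (x, y) ∈ C} ∉ J}) ∨
      (∀ C : Set (X × Y), MeasurableSet C → C ∉ FubiniProd I J →
          ∃ A : Set X, ∃ B : Set Y, MeasurableSet A ∧ MeasurableSet B ∧
            (A ×ˢ B) ∉ FubiniProd I J ∧ ∃ K ∈ FubiniProd I J, A ×ˢ B ⊆ C ∪ K)) :
    WSP (FubiniProd I J) := by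
  refine wsp_fubiniProd hI hJ hIwsp hJwsp ?_
  rcases halt with hBorel | hMeas | hRect
  · exact hasBorelPositiveSections_of_measAlg hI hIb fun C hC =>
      MeasurableSpace.measurableSet_generateFrom (.inl (hBorel C hC))
  · exact hasBorelPositiveSections_of_measAlg hI hIb fun C hC =>
      hMeas C (MeasurableSpace.measurableSet_generateFrom (.inl hC))
  · exact hasBorelPositiveSections_of_positive_rectangle hI hIb hJ hRect

/-- if `I` and `J` have WSP and `J` is Borel-on-Borel, or `J` is
measurable-on-measurable, or `(Bor(X×Y), I⊗J)` has the positive rectangle property,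
then `I ⊗ J` has WSP. -/
theorem fubini_wsp
    {X Y : Type*} [TopologicalSpace X] [PolishSpace X] [AddCommGroup X]
    [IsTopologicalAddGroup X] [MeasurableSpace X] [BorelSpace X]
    [TopologicalSpace Y] [PolishSpace Y] [AddCommGroup Y]
    [IsTopologicalAddGroup Y] [MeasurableSpace Y] [BorelSpace Y]
    (I : Set (Set X)) (J : Set (Set Y))
    (hI : IsSigmaIdeal I) (hIb : HasBorelBase I)
    (hJ : IsSigmaIdeal J) (hJb : HasBorelBase J)
    (hIwsp : WSP I) (hJwsp : WSP J)
    (halt :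
      (∀ C : Set (X × Y), MeasurableSet C →
          MeasurableSet {x : X | {y : Y | (x, y) ∈ C} ∉ J}) ∨
      (∀ C : Set (X × Y), MeasurableSet[measAlg (FubiniProd I J)] C →
          MeasurableSet[measAlg I] {x : X | {y : Y | (x, y) ∈ C} ∉ J}) ∨
      (∀ C : Set (X × Y), MeasurableSet C → C ∉ FubiniProd I J →
          ∃ A : Set X, ∃ B : Set Y, MeasurableSet A ∧ MeasurableSet B ∧
            (A ×ˢ B) ∉ FubiniProd I J ∧ ∃ K ∈ FubiniProd I J, A ×ˢ B ⊆ C ∪ K)) :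
    WSP (FubiniProd I J) :=
  fubini_wsp_general I J hI hIb hJ hIwsp hJwsp halt
end

section
/- Let (X,+) be an Abelian Polish group and let I be a proper translation-invariant σ-ideal on X with Borel base containing all singletons. Then the following are equivalent: (i) I has the Very Weak Smital Property; (ii) I is maximal among proper translation-invariant σ-ideals on X with Borel base, i.e. for every proper translation-invariant σ-ideal J on X with Borel base, I ⊆ J implies I = J. -/
open scoped Pointwise

/-- A proper translation-invariant σ-ideal with Borel base containing all singletons. -/
def IsMaxCandidate {X : Type*} [AddCommGroup X] [MeasurableSpace X]
    (I : Set (Set X)) : Prop :=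
  (∀ x : X, {x} ∈ I) ∧
  (∀ A ∈ I, ∀ B : Set X, B ⊆ A → B ∈ I) ∧
  (∀ f : ℕ → Set X, (∀ n, f n ∈ I) → (⋃ n, f n) ∈ I) ∧
  (∀ A ∈ I, ∃ B : Set X, MeasurableSet B ∧ A ⊆ B ∧ B ∈ I) ∧
  (Set.univ ∉ I) ∧
  (∀ A ∈ I, ∀ x : X, (fun a => x + a) '' A ∈ I)

/-!
If `I` has the VWSP and `J ⊇ I` is a proper invariant σ-ideal with Borel base, a
Borel `B ∈ J \ I` would give a countable `D` with `D + B ∈ J` and `(D + B)ᶜ ∈ I ⊆ J`, so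
`X ∈ J`. Conversely, if the VWSP fails for some Borel `B ∉ I`, the sets covered by countably
many translates of `B` up to a set in `I` form a proper invariant σ-ideal with Borel base
strictly larger than `I`.
-/

def HasVWSP {X : Type*} [AddCommGroup X] [MeasurableSpace X] (I : Set (Set X)) : Prop :=
  ∀ B : Set X, MeasurableSet B → B ∉ I → ∃ D : Set X, D.Countable ∧ (D + B)ᶜ ∈ I

namespace IsMaxCandidate

variable {X : Type*} [AddCommGroup X] [MeasurableSpace X] {I J : Set (Set X)} {A B D : Set X}

theorem mono (hI : IsMaxCandidate I) (hA : A ∈ I) (hBA : B ⊆ A) : B ∈ I :=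
  hI.2.1 A hA B hBA

theorem empty_mem (hI : IsMaxCandidate I) : ∅ ∈ I :=
  hI.mono (hI.1 0) (Set.empty_subset _)

theorem iUnion_mem {ι : Type*} [Countable ι] (hI : IsMaxCandidate I) {f : ι → Set X}
    (hf : ∀ i, f i ∈ I) : ⋃ i, f i ∈ I := by
  cases isEmpty_or_nonempty ι
  · simpa using hI.empty_mem
  · obtain ⟨g, hg⟩ := exists_surjective_nat ι
    rw [← hg.iUnion_comp]
    exact hI.2.2.1 _ fun n => hf (g n)

theorem biUnion_mem {ι : Type*} (hI : IsMaxCandidate I) {s : Set ι} (hs : s.Countable)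
    {f : ι → Set X} (hf : ∀ i ∈ s, f i ∈ I) : ⋃ i ∈ s, f i ∈ I := by
  have := hs.to_subtype
  rw [Set.biUnion_eq_iUnion]
  exact hI.iUnion_mem fun i => hf i i.2

theorem union_mem (hI : IsMaxCandidate I) (hA : A ∈ I) (hB : B ∈ I) : A ∪ B ∈ I := by
  rw [Set.union_eq_iUnion]
  exact hI.iUnion_mem fun b => by cases b <;> assumption

theorem exists_measurableSet_superset (hI : IsMaxCandidate I) (hA : A ∈ I) :
    ∃ B, MeasurableSet B ∧ A ⊆ B ∧ B ∈ I :=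
  hI.2.2.2.1 A hA

theorem univ_notMem (hI : IsMaxCandidate I) : Set.univ ∉ I :=
  hI.2.2.2.2.1

theorem compl_notMem (hI : IsMaxCandidate I) (hA : A ∈ I) : Aᶜ ∉ I := fun hAc =>
  hI.univ_notMem (by simpa using hI.union_mem hA hAc)

theorem image_add_left_mem (hI : IsMaxCandidate I) (hA : A ∈ I) (x : X) : (x + ·) '' A ∈ I :=
  hI.2.2.2.2.2 A hA x

theorem add_mem (hI : IsMaxCandidate I) (hD : D.Countable) (hB : B ∈ I) : D + B ∈ I := by
  rw [← Set.iUnion_add_left_image]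
  exact hI.biUnion_mem hD fun d _ => hI.image_add_left_mem hB d

theorem eq_of_hasVWSP_of_subset (hI : IsMaxCandidate I) (hJ : IsMaxCandidate J)
    (hvwsp : HasVWSP I) (hIJ : I ⊆ J) : I = J := by
  refine hIJ.antisymm fun A hA => ?_
  obtain ⟨B, hBm, hAB, hBJ⟩ := hJ.exists_measurableSet_superset hA
  by_contra hAI
  obtain ⟨D, hD, hDB⟩ := hvwsp B hBm fun hBI => hAI (hI.mono hBI hAB)
  exact hJ.compl_notMem (hJ.add_mem hD hBJ) (hIJ hDB)

end IsMaxCandidate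

theorem Set.image_add_left_add {X : Type*} [AddSemigroup X] (x : X) (D B : Set X) :
    (x + ·) '' (D + B) = (x + ·) '' D + B := by
  rw [← Set.singleton_add, ← Set.singleton_add, add_assoc]

section TranslatesHull

variable {X : Type*} [AddCommGroup X] {I : Set (Set X)} {A B D : Set X}

def translatesHull (I : Set (Set X)) (B : Set X) : Set (Set X) :=
  {A | ∃ D : Set X, D.Countable ∧ A \ (D + B) ∈ I}

theorem subset_translatesHull : I ⊆ translatesHull I B := fun A hA =>
  ⟨∅, Set.countable_empty, by simpa using hA⟩

theorem univ_mem_translatesHull_iff :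
    Set.univ ∈ translatesHull I B ↔ ∃ D : Set X, D.Countable ∧ (D + B)ᶜ ∈ I := by
  simp only [translatesHull, Set.mem_ofPred_eq, Set.compl_eq_univ_sdiff]

variable [MeasurableSpace X]

theorem IsMaxCandidate.self_mem_translatesHull (hI : IsMaxCandidate I) :
    B ∈ translatesHull I B :=
  ⟨{0}, Set.countable_singleton 0, by simpa using hI.empty_mem⟩

variable [MeasurableAdd X]

theorem MeasurableSet.image_add_left (hA : MeasurableSet A) (x : X) :
    MeasurableSet ((x + ·) '' A) := by
  rw [Set.image_add_left]
  exact hA.preimage (measurable_const_add _)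

theorem MeasurableSet.countable_add (hD : D.Countable) (hB : MeasurableSet B) :
    MeasurableSet (D + B) := by
  rw [← Set.iUnion_add_left_image]
  exact .biUnion hD fun d _ => hB.image_add_left d

theorem IsMaxCandidate.translatesHull (hI : IsMaxCandidate I) (hBm : MeasurableSet B)
    (hBne : B.Nonempty) (hproper : Set.univ ∉ translatesHull I B) :
    IsMaxCandidate (translatesHull I B) := by
  obtain ⟨b, hb⟩ := hBne
  refine ⟨fun x => ?_, ?_, fun f hf => ?_, ?_, hproper, ?_⟩
  · refine ⟨{x - b}, Set.countable_singleton _, ?_⟩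
    have hx : x ∈ ({x - b} : Set X) + B := ⟨x - b, rfl, b, hb, sub_add_cancel x b⟩
    rw [Set.sdiff_eq_empty.2 (Set.singleton_subset_iff.2 hx)]
    exact hI.empty_mem
  · rintro A ⟨D, hD, hAD⟩ C hCA
    exact ⟨D, hD, hI.mono hAD (Set.sdiff_subset_sdiff_left hCA)⟩
  · choose D hD hfD using hf
    refine ⟨⋃ n, D n, Set.countable_iUnion hD, ?_⟩
    rw [Set.iUnion_add, Set.iUnion_sdiff]
    exact hI.iUnion_mem fun n =>
      hI.mono (hfD n) (Set.sdiff_subset_sdiff_right (Set.subset_iUnion (fun m => D m + B) n))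
  · rintro A ⟨D, hD, hAD⟩
    obtain ⟨Z, hZm, hAZ, hZI⟩ := hI.exists_measurableSet_superset hAD
    refine ⟨D + B ∪ Z, (hBm.countable_add hD).union hZm, Set.sdiff_subset_iff.1 hAZ, D, hD,
      hI.mono hZI ?_⟩
    rw [Set.union_sdiff_left]
    exact Set.sdiff_subset
  · rintro A ⟨D, hD, hAD⟩ x
    refine ⟨(x + ·) '' D, hD.image _, ?_⟩
    rw [← Set.image_add_left_add, ← Set.image_sdiff (add_right_injective x)]
    exact hI.image_add_left_mem hAD x

theorem IsMaxCandidate.hasVWSP_of_maximal (hI : IsMaxCandidate I)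
    (hmax : ∀ J : Set (Set X), IsMaxCandidate J → I ⊆ J → I = J) : HasVWSP I := by
  intro B hBm hBI
  by_contra hno
  rw [← univ_mem_translatesHull_iff] at hno
  have hBne : B.Nonempty := Set.nonempty_iff_ne_empty.2 fun h => hBI (h ▸ hI.empty_mem)
  have hIJ := hmax _ (hI.translatesHull hBm hBne hno) subset_translatesHull
  exact hBI (hIJ ▸ hI.self_mem_translatesHull)

end TranslatesHull

theorem vwsp_iff_maximal_general
    {X : Type*} [TopologicalSpace X] [AddCommGroup X]
    [IsTopologicalAddGroup X] [MeasurableSpace X] [BorelSpace X]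
    (I : Set (Set X)) (hI : IsMaxCandidate I) :
    (∀ B : Set X, MeasurableSet B → B ∉ I →
      ∃ D : Set X, D.Countable ∧ (D + B)ᶜ ∈ I) ↔
    (∀ J : Set (Set X), IsMaxCandidate J → I ⊆ J → I = J) :=
  ⟨fun hvwsp _ hJ hIJ => hI.eq_of_hasVWSP_of_subset hJ hvwsp hIJ, hI.hasVWSP_of_maximal⟩

/-- for a proper translation-invariant σ-ideal `I` with Borel base, the
Very Weak Smital Property is equivalent to maximality among proper translation-invariant
σ-ideals with Borel base. -/
theorem vwsp_iff_maximal
    {X : Type*} [TopologicalSpace X] [PolishSpace X] [AddCommGroup X]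
    [IsTopologicalAddGroup X] [MeasurableSpace X] [BorelSpace X]
    (I : Set (Set X)) (hI : IsMaxCandidate I) :
    (∀ B : Set X, MeasurableSet B → B ∉ I →
      ∃ D : Set X, D.Countable ∧ (D + B)ᶜ ∈ I) ↔
    (∀ J : Set (Set X), IsMaxCandidate J → I ⊆ J → I = J) :=
  vwsp_iff_maximal_general I hI
end

section
/- Let (X,+) be an Abelian Polish group and let {I_n : n ∈ ω} be a countable family of pairwise distinct σ-ideals on X, each a proper translation-invariant σ-ideal with Borel base containing all singletons which is maximal among proper translation-invariant σ-ideals with Borel base on X. Then for each n ∈ ω, the σ-ideal I_n is orthogonal to ⋂_{k ∈ ω, k≠n} I_k: there exists a set A ⊆ X with A ∈ I_n and X\A ∈ I_k for every k ∈ ω with k ≠ n. -/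
open scoped Pointwise

/-- A proper translation-invariant σ-ideal with Borel base containing all singletons. -/
def IsInvariantIdeal {X : Type*} [AddCommGroup X] [MeasurableSpace X]
    (I : Set (Set X)) : Prop :=
  (∀ x : X, {x} ∈ I) ∧
  (∀ A ∈ I, ∀ B : Set X, B ⊆ A → B ∈ I) ∧
  (∀ f : ℕ → Set X, (∀ n, f n ∈ I) → (⋃ n, f n) ∈ I) ∧
  (∀ A ∈ I, ∃ B : Set X, MeasurableSet B ∧ A ⊆ B ∧ B ∈ I) ∧
  (Set.univ ∉ I) ∧
  (∀ A ∈ I, ∀ x : X, (fun a => x + a) '' A ∈ I)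

/-- `I` is maximal among proper translation-invariant σ-ideals with Borel base. -/
def IsMaximalInvariantIdeal {X : Type*} [AddCommGroup X] [MeasurableSpace X]
    (I : Set (Set X)) : Prop :=
  IsInvariantIdeal I ∧ ∀ J : Set (Set X), IsInvariantIdeal J → I ⊆ J → I = J

namespace IsInvariantIdeal

variable {X : Type*} [AddCommGroup X] [MeasurableSpace X] {I J : Set (Set X)}

lemma singleton_mem (hI : IsInvariantIdeal I) (x : X) : {x} ∈ I := hI.1 x

lemma mem_of_subset (hI : IsInvariantIdeal I) {A B : Set X} (hA : A ∈ I) (hBA : B ⊆ A) :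
    B ∈ I :=
  hI.2.1 A hA B hBA

lemma iUnion_mem (hI : IsInvariantIdeal I) {f : ℕ → Set X} (hf : ∀ n, f n ∈ I) :
    ⋃ n, f n ∈ I :=
  hI.2.2.1 f hf

lemma exists_measurableSet_superset (hI : IsInvariantIdeal I) {A : Set X} (hA : A ∈ I) :
    ∃ B, MeasurableSet B ∧ A ⊆ B ∧ B ∈ I :=
  hI.2.2.2.1 A hA

lemma univ_notMem (hI : IsInvariantIdeal I) : Set.univ ∉ I := hI.2.2.2.2.1

lemma image_add_mem (hI : IsInvariantIdeal I) {A : Set X} (hA : A ∈ I) (x : X) :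
    (fun a => x + a) '' A ∈ I :=
  hI.2.2.2.2.2 A hA x

lemma empty_mem (hI : IsInvariantIdeal I) : ∅ ∈ I :=
  hI.mem_of_subset (hI.singleton_mem 0) (Set.empty_subset _)

def sup (I J : Set (Set X)) : Set (Set X) := {S | ∃ A ∈ I, ∃ B ∈ J, S ⊆ A ∪ B}

lemma subset_sup_left (hJ : IsInvariantIdeal J) : I ⊆ sup I J :=
  fun A hA => ⟨A, hA, ∅, hJ.empty_mem, Set.subset_union_left⟩

lemma subset_sup_right (hI : IsInvariantIdeal I) : J ⊆ sup I J :=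
  fun B hB => ⟨∅, hI.empty_mem, B, hB, Set.subset_union_right⟩

lemma sup_of_univ_notMem (hI : IsInvariantIdeal I) (hJ : IsInvariantIdeal J)
    (huniv : Set.univ ∉ sup I J) : IsInvariantIdeal (sup I J) := by
  refine ⟨fun x => hJ.subset_sup_left (hI.singleton_mem x), ?_, ?_, ?_, huniv, ?_⟩
  · rintro S ⟨A, hA, B, hB, hS⟩ T hTS
    exact ⟨A, hA, B, hB, hTS.trans hS⟩
  · intro f hf
    choose A hA B hB hf using hf
    refine ⟨⋃ n, A n, hI.iUnion_mem hA, ⋃ n, B n, hJ.iUnion_mem hB, ?_⟩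
    rw [← Set.iUnion_union_distrib]
    exact Set.iUnion_mono hf
  · rintro S ⟨A, hA, B, hB, hS⟩
    obtain ⟨A', hA'm, hAA', hA'⟩ := hI.exists_measurableSet_superset hA
    obtain ⟨B', hB'm, hBB', hB'⟩ := hJ.exists_measurableSet_superset hB
    exact ⟨A' ∪ B', hA'm.union hB'm, hS.trans (Set.union_subset_union hAA' hBB'),
      A', hA', B', hB', subset_rfl⟩
  · rintro S ⟨A, hA, B, hB, hS⟩ x
    refine ⟨_, hI.image_add_mem hA x, _, hJ.image_add_mem hB x, ?_⟩
    rw [← Set.image_union]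
    exact Set.image_mono hS

end IsInvariantIdeal

namespace IsMaximalInvariantIdeal

variable {X : Type*} [AddCommGroup X] [MeasurableSpace X] {I J : Set (Set X)}

/-- If `univ` were not in the join of `I` and `J`, that join would be a proper invariant
σ-ideal above both, so maximality would force `I = J`. -/
lemma exists_mem_compl_mem_of_ne (hI : IsMaximalInvariantIdeal I)
    (hJ : IsMaximalInvariantIdeal J) (hne : I ≠ J) : ∃ A ∈ I, Aᶜ ∈ J := by
  by_cases huniv : Set.univ ∈ IsInvariantIdeal.sup I J
  · obtain ⟨A, hA, B, hB, hAB⟩ := huniv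
    refine ⟨A, hA, hJ.1.mem_of_subset hB fun x hx => ?_⟩
    exact (hAB (Set.mem_univ x)).resolve_left hx
  · have hsup := hI.1.sup_of_univ_notMem hJ.1 huniv
    exact absurd ((hI.2 _ hsup hJ.1.subset_sup_left).trans
      (hJ.2 _ hsup hI.1.subset_sup_right).symm) hne

end IsMaximalInvariantIdeal

theorem maximal_invariant_ideals_orthogonal_general
    {X : Type*} [AddCommGroup X] [MeasurableSpace X]
    (I : ℕ → Set (Set X))
    (hmax : ∀ n, IsMaximalInvariantIdeal (I n))
    (hdist : ∀ m n : ℕ, m ≠ n → I m ≠ I n) :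
    ∀ n : ℕ, ∃ A : Set X, A ∈ I n ∧ ∀ k : ℕ, k ≠ n → Aᶜ ∈ I k := by
  intro n
  have hpair : ∀ k, ∃ A ∈ I n, k ≠ n → Aᶜ ∈ I k := fun k => by
    by_cases hk : k = n
    · exact ⟨∅, (hmax n).1.empty_mem, fun h => absurd hk h⟩
    · obtain ⟨A, hA, hAc⟩ :=
        (hmax n).exists_mem_compl_mem_of_ne (hmax k) (hdist n k (Ne.symm hk))
      exact ⟨A, hA, fun _ => hAc⟩
  choose A hA hAc using hpair
  refine ⟨⋃ k, A k, (hmax n).1.iUnion_mem hA, fun k hk => ?_⟩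
  exact (hmax k).1.mem_of_subset (hAc k hk) (Set.compl_subset_compl.2 (Set.subset_iUnion A k))

/-- given countably many pairwise distinct maximal invariant σ-ideals with
Borel bases, each one is orthogonal to the intersection of all the others. -/
theorem maximal_invariant_ideals_orthogonal
    {X : Type*} [TopologicalSpace X] [PolishSpace X] [AddCommGroup X]
    [IsTopologicalAddGroup X] [MeasurableSpace X] [BorelSpace X]
    (I : ℕ → Set (Set X))
    (hmax : ∀ n, IsMaximalInvariantIdeal (I n))
    (hdist : ∀ m n : ℕ, m ≠ n → I m ≠ I n) :
    ∀ n : ℕ, ∃ A : Set X, A ∈ I n ∧ ∀ k : ℕ, k ≠ n → Aᶜ ∈ I k :=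
  maximal_invariant_ideals_orthogonal_general I hmax hdist
end
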